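/- For n : ℕ and indices i, j with i + 2 ≤ j ≤ n, consider the degeneracies σᵢ : Fin (n+2) → Fin (n+1) and σⱼ : Fin (n+2) → Fin (n+1). Then σⱼ₋₁ ∘ σᵢ = σᵢ ∘ σⱼ as functions Fin (n+2) → Fin n, and the square whose span legs are σᵢ and σⱼ (from Fin (n+2)) and whose cocone legs are σⱼ₋₁ : Fin (n+1) → Fin n (completing σᵢ) and σᵢ : Fin (n+1) → Fin n (completing σⱼ) is a pushout in sLin: two degeneracy maps collapsing disjoint, non-adjacent pairs push out by performing the other collapse. -/
import Mathlib


/-- A commuting square `p₀ ∘ f = p₁ ∘ g` of monotone surjections is a pushout in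
`sLin` (the category of finite linear orders `Fin n` and monotone surjections). -/
def SLinPushout {m a b n : ℕ} (f : Fin m → Fin a) (g : Fin m → Fin b)
    (p₀ : Fin a → Fin n) (p₁ : Fin b → Fin n) : Prop :=
  ∀ (k : ℕ) (q₀ : Fin a → Fin k) (q₁ : Fin b → Fin k),
    Monotone q₀ → Function.Surjective q₀ → Monotone q₁ → Function.Surjective q₁ →
    q₀ ∘ f = q₁ ∘ g →
    ∃! h : Fin n → Fin k,
      (Monotone h ∧ Function.Surjective h) ∧ h ∘ p₀ = q₀ ∧ h ∘ p₁ = q₁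

/-- The degeneracy `σᵢ : Fin (n+2) → Fin (n+1)`: for `i ≤ n`, it sends `j` to `j`
when `j ≤ i` and to `j - 1` when `j > i` (identifying `i` and `i+1`). -/
def sigmaMap (n : ℕ) (i : ℕ) : Fin (n + 2) → Fin (n + 1) := fun j =>
  if (j : ℕ) ≤ i then ⟨min (j : ℕ) n, by have := j.isLt; omega⟩
  else ⟨(j : ℕ) - 1, by have := j.isLt; omega⟩

lemma sigma_val (n i : ℕ) (x : Fin (n + 2)) :
    (sigmaMap n i x : ℕ) = if (x : ℕ) ≤ i then min (x : ℕ) n else (x : ℕ) - 1 := by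
  unfold sigmaMap; split_ifs <;> rfl

lemma sigma_surj (n i : ℕ) : Function.Surjective (sigmaMap n i) := by
  intro x
  refine ⟨⟨if (x : ℕ) ≤ i then (x : ℕ) else (x : ℕ) + 1,
    by have := x.isLt; split_ifs <;> omega⟩, ?_⟩
  apply Fin.ext
  rw [sigma_val]
  have := x.isLt
  simp only
  split_ifs <;> omega

/-- A section of `sigmaMap n i`. -/
def secMap (n i : ℕ) : Fin (n + 1) → Fin (n + 2) := fun t =>
  if (t : ℕ) ≤ i then ⟨(t : ℕ), by have := t.isLt; omega⟩
  else ⟨(t : ℕ) + 1, by have := t.isLt; omega⟩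

lemma sec_val (n i : ℕ) (t : Fin (n + 1)) :
    (secMap n i t : ℕ) = if (t : ℕ) ≤ i then (t : ℕ) else (t : ℕ) + 1 := by
  unfold secMap; split_ifs <;> rfl

lemma sec_section (n i : ℕ) (t : Fin (n + 1)) : sigmaMap n i (secMap n i t) = t := by
  apply Fin.ext
  rw [sigma_val, sec_val]
  have := t.isLt
  split_ifs <;> omega

/-- for `i + 2 ≤ j ≤ n`, the degeneracies `σᵢ` and `σⱼ` (collapsing
disjoint, non-adjacent pairs) push out in `sLin` by performing the other collapse:
the cocone legs are `σⱼ₋₁` (completing `σᵢ`) and `σᵢ` (completing `σⱼ`).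
(Stated with the target `Fin n` of the cocone legs written as `Fin (n+1)`, so the
hypothesis `j ≤ n` becomes `j ≤ n + 1`.) -/
theorem slin_pushout_sigma_disjoint (n i j : ℕ) (hij : i + 2 ≤ j) (hj : j ≤ n + 1) :
    (sigmaMap n (j - 1) ∘ sigmaMap (n + 1) i = sigmaMap n i ∘ sigmaMap (n + 1) j) ∧
    SLinPushout (sigmaMap (n + 1) i) (sigmaMap (n + 1) j)
      (sigmaMap n (j - 1)) (sigmaMap n i) := by
  have hcsq : sigmaMap n (j - 1) ∘ sigmaMap (n + 1) i
      = sigmaMap n i ∘ sigmaMap (n + 1) j := by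
    funext x
    apply Fin.ext
    have hx := x.isLt
    simp only [Function.comp_apply, sigma_val]
    split_ifs <;> omega
  refine ⟨hcsq, ?_⟩
  intro k q₀ q₁ hm₀ hs₀ hm₁ hs₁ hcomm
  have pi : i < n + 1 + 2 := by omega
  have pi' : i + 1 < n + 1 + 2 := by omega
  have qi : i < n + 2 := by omega
  have qi' : i + 1 < n + 2 := by omega
  -- q₁ collapses i and i+1
  have hcollapse : q₁ ⟨i, qi⟩ = q₁ ⟨i + 1, qi'⟩ := by
    have e1 : sigmaMap (n + 1) i ⟨i, pi⟩ = ⟨i, qi⟩ := by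
      apply Fin.ext; simp only [sigma_val]; split_ifs <;> omega
    have e2 : sigmaMap (n + 1) j ⟨i, pi⟩ = ⟨i, qi⟩ := by
      apply Fin.ext; simp only [sigma_val]; split_ifs <;> omega
    have e3 : sigmaMap (n + 1) i ⟨i + 1, pi'⟩ = ⟨i, qi⟩ := by
      apply Fin.ext; simp only [sigma_val]; split_ifs <;> omega
    have e4 : sigmaMap (n + 1) j ⟨i + 1, pi'⟩ = ⟨i + 1, qi'⟩ := by
      apply Fin.ext; simp only [sigma_val]; split_ifs <;> omega
    have h1 := congrFun hcomm (⟨i, pi⟩ : Fin (n + 1 + 2))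
    have h2 := congrFun hcomm (⟨i + 1, pi'⟩ : Fin (n + 1 + 2))
    simp only [Function.comp_apply, e1, e2, e3, e4] at h1 h2
    rw [← h1, ← h2]
  set h : Fin (n + 1) → Fin k := q₁ ∘ secMap n i with hh
  have hq1 : h ∘ sigmaMap n i = q₁ := by
    funext x
    have hx := x.isLt
    simp only [hh, Function.comp_apply]
    by_cases hxi : (x : ℕ) = i + 1
    · have e1 : secMap n i (sigmaMap n i x) = ⟨i, qi⟩ := by
        apply Fin.ext
        simp only [sec_val, sigma_val]
        split_ifs <;> omega
      have e2 : x = ⟨i + 1, qi'⟩ := Fin.ext hxi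
      rw [e1, e2]
      exact hcollapse
    · congr 1
      apply Fin.ext
      rw [sec_val, sigma_val]
      split_ifs <;> omega
  have hq0 : h ∘ sigmaMap n (j - 1) = q₀ := by
    funext x
    obtain ⟨y, hy⟩ := sigma_surj (n + 1) i x
    calc h (sigmaMap n (j - 1) x)
        = h (sigmaMap n (j - 1) (sigmaMap (n + 1) i y)) := by rw [hy]
      _ = h (sigmaMap n i (sigmaMap (n + 1) j y)) := by
          rw [show sigmaMap n (j - 1) (sigmaMap (n + 1) i y)
              = sigmaMap n i (sigmaMap (n + 1) j y) from congrFun hcsq y]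
      _ = q₁ (sigmaMap (n + 1) j y) := congrFun hq1 _
      _ = q₀ (sigmaMap (n + 1) i y) := (congrFun hcomm y).symm
      _ = q₀ x := by rw [hy]
  have hsurj : Function.Surjective h := by
    intro y
    obtain ⟨x, hx⟩ := hs₁ y
    exact ⟨sigmaMap n i x, by rw [← hx]; exact congrFun hq1 x⟩
  have hmono : Monotone h := by
    apply hm₁.comp
    intro a b hab
    rw [Fin.le_def, sec_val, sec_val]
    rw [Fin.le_def] at hab
    split_ifs <;> omega
  refine ⟨h, ⟨⟨hmono, hsurj⟩, hq0, hq1⟩, ?_⟩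
  rintro h' ⟨-, -, hq1'⟩
  funext z
  calc h' z = h' (sigmaMap n i (secMap n i z)) := by rw [sec_section]
    _ = q₁ (secMap n i z) := congrFun hq1' (secMap n i z)
    _ = h z := rfl
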